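/- Validity-preserving weakening (relational atoms on the right): if the sequent Γ ⊢ Δ, x→a z is valid and x→a z ∉ Γ, then Γ ⊢ Δ is valid. -/

import Mathlib

set_option maxHeartbeats 1000000

/-! ### Syntax of PDL -/

mutual
inductive PDLFormula : Type
  | bot : PDLFormula
  | atom : ℕ → PDLFormula
  | and : PDLFormula → PDLFormula → PDLFormula
  | or : PDLFormula → PDLFormula → PDLFormula
  | imp : PDLFormula → PDLFormula → PDLFormula
  | box : PDLProgram → PDLFormula → PDLFormula
  deriving DecidableEq

inductive PDLProgram : Type
  | atom : ℕ → PDLProgram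
  | comp : PDLProgram → PDLProgram → PDLProgram
  | choice : PDLProgram → PDLProgram → PDLProgram
  | test : PDLFormula → PDLProgram
  | star : PDLProgram → PDLProgram
  deriving DecidableEq
end

/-! ### Semantics of PDL -/

structure PDLModel where
  State : Type
  propI : ℕ → Set State
  progI : ℕ → Set (State × State)

mutual
def PDLFormula.sem (m : PDLModel) : PDLFormula → Set m.State
  | .bot => ∅
  | .atom p => m.propI p
  | .and φ ψ => PDLFormula.sem m φ ∩ PDLFormula.sem m ψ
  | .or φ ψ => PDLFormula.sem m φ ∪ PDLFormula.sem m ψ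
  | .imp φ ψ => (PDLFormula.sem m φ)ᶜ ∪ PDLFormula.sem m ψ
  | .box α φ => { s | ∀ t, (s, t) ∈ PDLProgram.sem m α → t ∈ PDLFormula.sem m φ }

def PDLProgram.sem (m : PDLModel) : PDLProgram → Set (m.State × m.State)
  | .atom a => m.progI a
  | .comp α β => { p | ∃ t, (p.1, t) ∈ PDLProgram.sem m α ∧ (t, p.2) ∈ PDLProgram.sem m β }
  | .choice α β => PDLProgram.sem m α ∪ PDLProgram.sem m β
  | .test φ => { p | p.1 = p.2 ∧ p.1 ∈ PDLFormula.sem m φ }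
  | .star α => { p | Relation.ReflTransGen (fun s t => (s, t) ∈ PDLProgram.sem m α) p.1 p.2 }
end

/-! ### Labelled sequents -/

abbrev Label := ℕ

inductive SeqElem : Type
  | rel : Label → ℕ → Label → SeqElem
  | lab : Label → PDLFormula → SeqElem
  deriving DecidableEq

structure Sequent where
  ant : Finset SeqElem
  suc : Finset SeqElem

def SeqElem.sat (m : PDLModel) (v : Label → m.State) : SeqElem → Prop
  | .rel x a y => (v x, v y) ∈ m.progI a
  | .lab x φ => v x ∈ PDLFormula.sem m φ

def Sequent.valid (S : Sequent) : Prop :=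
  ∀ (m : PDLModel) (v : Label → m.State),
    (∀ A ∈ S.ant, A.sat m v) → ∃ B ∈ S.suc, B.sat m v

def Sequent.falsifiedBy (S : Sequent) (m : PDLModel) (v : Label → m.State) : Prop :=
  (∀ A ∈ S.ant, A.sat m v) ∧ ∀ B ∈ S.suc, ¬ B.sat m v

/-! ### Labels, starred labels, reachability -/

def SeqElem.labels : SeqElem → Finset Label
  | .rel x _ y => {x, y}
  | .lab x _ => {x}

def labs (Γ : Finset SeqElem) : Finset Label := Γ.biUnion SeqElem.labels

def starred (Δ : Finset SeqElem) : Set Label :=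
  { x | ∃ α φ, SeqElem.lab x (PDLFormula.box (PDLProgram.star α) φ) ∈ Δ }

def relStep (Γ : Finset SeqElem) (x y : Label) : Prop := ∃ a, SeqElem.rel x a y ∈ Γ

/-- `x` reaches `y` through a (possibly empty) chain of relational atoms of `Γ`. -/
def reaches (Γ : Finset SeqElem) : Label → Label → Prop := Relation.ReflTransGen (relStep Γ)

/-- A set of relational atoms is acyclic when no label reaches itself via a nonempty chain. -/
def RelAcyclic (Γ : Finset SeqElem) : Prop := ∀ x, ¬ Relation.TransGen (relStep Γ) x x

def Sequent.Acyclic (S : Sequent) : Prop := RelAcyclic S.ant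

/-! ### Classification of formulas, normal sequents -/

def PDLFormula.isAtomic : PDLFormula → Prop
  | .bot => True
  | .atom _ => True
  | _ => False

def PDLFormula.isIterated : PDLFormula → Prop
  | .box (.star _) _ => True
  | _ => False

def SeqElem.isRel : SeqElem → Prop
  | .rel _ _ _ => True
  | _ => False

def NormalSeq (S : Sequent) : Prop :=
  (∀ A ∈ S.ant, A ∉ S.suc) ∧
  (∀ A ∈ S.suc, ∃ x φ, A = SeqElem.lab x φ ∧ (φ.isAtomic ∨ φ.isIterated)) ∧
  (∀ A ∈ S.ant, A.isRel ∨ ∃ x φ, A = SeqElem.lab x φ ∧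
      (φ.isAtomic ∨ ∃ a ψ, φ = PDLFormula.box (PDLProgram.atom a) ψ ∧
        ∀ y, SeqElem.rel x a y ∉ S.ant))

/-! ### Test-freeness and subformulas -/

mutual
def PDLFormula.TestFree : PDLFormula → Prop
  | .bot => True
  | .atom _ => True
  | .and φ ψ => PDLFormula.TestFree φ ∧ PDLFormula.TestFree ψ
  | .or φ ψ => PDLFormula.TestFree φ ∧ PDLFormula.TestFree ψ
  | .imp φ ψ => PDLFormula.TestFree φ ∧ PDLFormula.TestFree ψ
  | .box α φ => PDLProgram.TestFree α ∧ PDLFormula.TestFree φ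

def PDLProgram.TestFree : PDLProgram → Prop
  | .atom _ => True
  | .comp α β => PDLProgram.TestFree α ∧ PDLProgram.TestFree β
  | .choice α β => PDLProgram.TestFree α ∧ PDLProgram.TestFree β
  | .test _ => False
  | .star α => PDLProgram.TestFree α
end

def SeqElem.TestFree : SeqElem → Prop
  | .rel _ _ _ => True
  | .lab _ φ => φ.TestFree

def Sequent.TestFree (S : Sequent) : Prop :=
  (∀ A ∈ S.ant, A.TestFree) ∧ (∀ A ∈ S.suc, A.TestFree)

mutual
inductive Subf : PDLFormula → PDLFormula → Prop
  | refl (φ) : Subf φ φ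
  | andl {χ φ ψ} : Subf χ φ → Subf χ (PDLFormula.and φ ψ)
  | andr {χ φ ψ} : Subf χ ψ → Subf χ (PDLFormula.and φ ψ)
  | orl {χ φ ψ} : Subf χ φ → Subf χ (PDLFormula.or φ ψ)
  | orr {χ φ ψ} : Subf χ ψ → Subf χ (PDLFormula.or φ ψ)
  | impl {χ φ ψ} : Subf χ φ → Subf χ (PDLFormula.imp φ ψ)
  | impr {χ φ ψ} : Subf χ ψ → Subf χ (PDLFormula.imp φ ψ)
  | boxf {χ α φ} : Subf χ φ → Subf χ (PDLFormula.box α φ)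
  | boxp {χ α φ} : SubfP χ α → Subf χ (PDLFormula.box α φ)

inductive SubfP : PDLFormula → PDLProgram → Prop
  | compl {χ α β} : SubfP χ α → SubfP χ (PDLProgram.comp α β)
  | compr {χ α β} : SubfP χ β → SubfP χ (PDLProgram.comp α β)
  | choicel {χ α β} : SubfP χ α → SubfP χ (PDLProgram.choice α β)
  | choicer {χ α β} : SubfP χ β → SubfP χ (PDLProgram.choice α β)
  | test {χ φ} : Subf χ φ → SubfP χ (PDLProgram.test φ)
  | star {χ α} : SubfP χ α → SubfP χ (PDLProgram.star α)
end

/-! ### Label substitution -/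

def substLabel (x y z : Label) : Label := if z = x then y else z

def SeqElem.subst (x y : Label) : SeqElem → SeqElem
  | .rel z a w => .rel (substLabel x y z) a (substLabel x y w)
  | .lab z φ => .lab (substLabel x y z) φ

/-!
Given a countermodel `(m, v)` of `Γ ⊢ Δ`, tag every state of `m` with a label and remove the
single `a`-edge from `(v x, x)` to `(v z, z)`. The projection to `m` is a bounded morphism (an
`a`-edge of `m` lifts to any copy of its target other than the one tagged `z`), so formulas keep
their truth values. Under the valuation `l ↦ (v l, l)` every relational atom other than `x →a z`
keeps its truth value too, while `x →a z` becomes false; as it is not in `Γ`, this falsifies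
`Γ ⊢ Δ, x →a z`.
-/

structure PDLModel.BoundedMorphism (m' m : PDLModel) where
  toFun : m'.State → m.State
  mem_propI_iff : ∀ p s, s ∈ m'.propI p ↔ toFun s ∈ m.propI p
  map_progI : ∀ a s t, (s, t) ∈ m'.progI a → (toFun s, toFun t) ∈ m.progI a
  exists_progI :
    ∀ a s u, (toFun s, u) ∈ m.progI a → ∃ t, toFun t = u ∧ (s, t) ∈ m'.progI a

namespace PDLModel.BoundedMorphism

variable {m' m : PDLModel} (f : m'.BoundedMorphism m)

mutual
theorem mem_sem_iff :
    ∀ (φ : PDLFormula) (s : m'.State), s ∈ φ.sem m' ↔ f.toFun s ∈ φ.sem m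
  | .bot, _ => Iff.rfl
  | .atom p, s => f.mem_propI_iff p s
  | .and φ ψ, s => and_congr (mem_sem_iff φ s) (mem_sem_iff ψ s)
  | .or φ ψ, s => or_congr (mem_sem_iff φ s) (mem_sem_iff ψ s)
  | .imp φ ψ, s => or_congr (not_congr (mem_sem_iff φ s)) (mem_sem_iff ψ s)
  | .box α φ, s => by
      constructor
      · intro h u hu
        obtain ⟨t, rfl, ht⟩ := exists_program_sem α s u hu
        exact (mem_sem_iff φ t).1 (h t ht)
      · intro h t ht
        exact (mem_sem_iff φ t).2 (h _ (map_program_sem α s t ht))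

theorem map_program_sem : ∀ (α : PDLProgram) (s t : m'.State),
    (s, t) ∈ α.sem m' → (f.toFun s, f.toFun t) ∈ α.sem m
  | .atom a, s, t => f.map_progI a s t
  | .comp α β, s, t => fun ⟨u, hsu, hut⟩ =>
      ⟨f.toFun u, map_program_sem α s u hsu, map_program_sem β u t hut⟩
  | .choice α β, s, t => Or.imp (map_program_sem α s t) (map_program_sem β s t)
  | .test φ, s, _ => fun ⟨hst, hs⟩ => ⟨congrArg f.toFun hst, (mem_sem_iff φ s).1 hs⟩
  | .star α, s, t => fun h =>
      Relation.ReflTransGen.lift f.toFun (fun u w => map_program_sem α u w) s t h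

theorem exists_program_sem : ∀ (α : PDLProgram) (s : m'.State) (u : m.State),
    (f.toFun s, u) ∈ α.sem m → ∃ t, f.toFun t = u ∧ (s, t) ∈ α.sem m'
  | .atom a, s, u => f.exists_progI a s u
  | .comp α β, s, u => by
      rintro ⟨w, hw, hwu⟩
      obtain ⟨t₁, rfl, ht₁⟩ := exists_program_sem α s w hw
      obtain ⟨t₂, rfl, ht₂⟩ := exists_program_sem β t₁ u hwu
      exact ⟨t₂, rfl, t₁, ht₁, ht₂⟩
  | .choice α β, s, u => by
      rintro (h | h)
      · obtain ⟨t, rfl, ht⟩ := exists_program_sem α s u h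
        exact ⟨t, rfl, Or.inl ht⟩
      · obtain ⟨t, rfl, ht⟩ := exists_program_sem β s u h
        exact ⟨t, rfl, Or.inr ht⟩
  | .test φ, s, u => by
      rintro ⟨hsu, hs⟩
      exact ⟨s, hsu, rfl, (mem_sem_iff φ s).2 hs⟩
  | .star α, s, u => by
      intro h
      change Relation.ReflTransGen (fun w w' => (w, w') ∈ α.sem m) (f.toFun s) u at h
      induction h with
      | refl => exact ⟨s, rfl, Relation.ReflTransGen.refl⟩
      | tail _ hstep ih =>
          obtain ⟨t, rfl, ht⟩ := ih
          obtain ⟨t', rfl, ht'⟩ := exists_program_sem α t _ hstep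
          exact ⟨t', rfl, Relation.ReflTransGen.tail ht ht'⟩
end

end PDLModel.BoundedMorphism

namespace PDLModel

def taggedDeleteEdge (m : PDLModel) (ι : Type) (a : ℕ) (e : (m.State × ι) × (m.State × ι)) :
    PDLModel where
  State := m.State × ι
  propI p := Prod.fst ⁻¹' m.propI p
  progI b := {d | (d.1.1, d.2.1) ∈ m.progI b ∧ ¬(b = a ∧ d = e)}

def fstOfTaggedDeleteEdge (m : PDLModel) (ι : Type) [Nontrivial ι] (a : ℕ)
    (e : (m.State × ι) × (m.State × ι)) : (m.taggedDeleteEdge ι a e).BoundedMorphism m where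
  toFun := Prod.fst
  mem_propI_iff _ _ := Iff.rfl
  map_progI _ _ _ h := h.1
  exists_progI b s u h := by
    obtain ⟨j, hj⟩ := exists_ne e.2.2
    exact ⟨(u, j), rfl, h, fun ⟨_, hd⟩ => hj (congrArg (·.2.2) hd)⟩

theorem sat_taggedDeleteEdge_iff (m : PDLModel) (v : Label → m.State) {x z : Label} {a : ℕ}
    {A : SeqElem} (hA : A ≠ .rel x a z) :
    A.sat (m.taggedDeleteEdge Label a ((v x, x), (v z, z))) (fun l => (v l, l)) ↔ A.sat m v := by
  cases A with
  | rel y b w =>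
      refine and_iff_left_of_imp fun _ ⟨hb, hd⟩ => hA ?_
      obtain ⟨⟨-, rfl⟩, -, rfl⟩ := (Prod.mk_inj.mp hd).imp Prod.mk_inj.mp Prod.mk_inj.mp
      rw [hb]
  | lab y φ => exact (fstOfTaggedDeleteEdge m Label a _).mem_sem_iff φ (v y, y)

theorem not_sat_taggedDeleteEdge (m : PDLModel) (v : Label → m.State) (x z : Label) (a : ℕ) :
    ¬ (SeqElem.rel x a z).sat (m.taggedDeleteEdge Label a ((v x, x), (v z, z)))
      (fun l => (v l, l)) :=
  fun h => h.2 ⟨rfl, rfl⟩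

end PDLModel

/-- **Validity-preserving weakening (relational atoms on the right)**: if the sequent
`Γ ⊢ Δ, x →a z` is valid and `x →a z ∉ Γ`, then `Γ ⊢ Δ` is valid. -/
theorem valid_weakening_rel_right (Γ Δ : Finset SeqElem) (x z : Label) (a : ℕ)
    (hvalid : Sequent.valid ⟨Γ, insert (SeqElem.rel x a z) Δ⟩)
    (hnotin : SeqElem.rel x a z ∉ Γ) :
    Sequent.valid ⟨Γ, Δ⟩ := by
  intro m v hΓ
  have hsat {A : SeqElem} (hA : A ≠ .rel x a z) := m.sat_taggedDeleteEdge_iff v hA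
  obtain ⟨B, hB, hBsat⟩ := hvalid _ _ fun A hA =>
    (hsat (ne_of_mem_of_not_mem hA hnotin)).2 (hΓ A hA)
  have hne : B ≠ .rel x a z := by
    rintro rfl
    exact m.not_sat_taggedDeleteEdge v x z a hBsat
  exact ⟨B, (Finset.mem_insert.mp hB).resolve_left hne, (hsat hne).1 hBsat⟩
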